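/- If v is a vertex of degree 1 in an α-critical graph G, then v together with its unique neighbor forms a connected component of G. -/

import Mathlib

open Finset
open scoped Classical

/-- The Fibonacci index: the number of independent (stable) sets of `G`,
including the empty set. -/
noncomputable def fibIndex {V : Type*} [Fintype V] (G : SimpleGraph V) : ℕ :=
  (Finset.univ.filter fun s : Finset V => ∀ a ∈ s, ∀ b ∈ s, ¬ G.Adj a b).card

/-- The independence (stability) number of `G`. -/
noncomputable def indepNum {V : Type*} [Fintype V] (G : SimpleGraph V) : ℕ :=
  (Finset.univ.filter fun s : Finset V => ∀ a ∈ s, ∀ b ∈ s, ¬ G.Adj a b).sup Finset.card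

/-- A graph is `α`-critical if deleting any edge strictly increases the
independence number (a graph with no edges is `α`-critical by convention). -/
noncomputable def AlphaCritical {V : Type*} [Fintype V] (G : SimpleGraph V) : Prop :=
  ∀ e ∈ G.edgeSet, indepNum G < indepNum (G.deleteEdges {e})


/-
If `v` is a leaf with neighbour `w` and `w` had another neighbour `u`, criticality of the edge `wu`
gives an independent set of `G - wu` of size `α(G) + 1` containing `w` and `u` but not `v`.
Exchanging `w` for `v` yields an independent set of `G` of the same size, which is absurd.
So `{v, w}` is closed under adjacency, hence a connected component.
-/

section

variable {V : Type*}

theorem SimpleGraph.Reachable.mem_of_adj_closed {G : SimpleGraph V} {S : Set V}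
    (hS : ∀ a ∈ S, ∀ b, G.Adj a b → b ∈ S) {x y : V} (h : G.Reachable x y) (hx : x ∈ S) :
    y ∈ S := by
  rw [SimpleGraph.reachable_iff_reflTransGen] at h
  induction h with
  | refl => exact hx
  | tail _ hab ih => exact hS _ ih _ hab

theorem SimpleGraph.isIndepSet_coe_iff (G : SimpleGraph V) (s : Finset V) :
    G.IsIndepSet (s : Set V) ↔ ∀ a ∈ s, ∀ b ∈ s, ¬ G.Adj a b :=
  ⟨fun h _ ha _ hb hab => h ha hb hab.ne hab, fun h _ ha _ hb _ => h _ ha _ hb⟩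

theorem SimpleGraph.IsIndepSet.of_deleteEdges {G : SimpleGraph V} {x y : V} {s : Set V}
    (hs : (G.deleteEdges {s(x, y)}).IsIndepSet s) (hxy : ¬ (x ∈ s ∧ y ∈ s)) : G.IsIndepSet s := by
  intro a ha b hb hne hab
  refine hs ha hb hne (G.deleteEdges_adj.mpr ⟨hab, fun he => hxy ?_⟩)
  rcases Sym2.eq_iff.mp he with ⟨rfl, rfl⟩ | ⟨rfl, rfl⟩
  exacts [⟨ha, hb⟩, ⟨hb, ha⟩]

section IndepNum

variable [Fintype V] {G : SimpleGraph V}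

theorem card_le_indepNum {s : Finset V} (hs : G.IsIndepSet (s : Set V)) : s.card ≤ indepNum G :=
  Finset.le_sup (Finset.mem_filter.mpr ⟨Finset.mem_univ _, (G.isIndepSet_coe_iff s).mp hs⟩)

theorem exists_isIndepSet_card_eq_indepNum (G : SimpleGraph V) :
    ∃ s : Finset V, G.IsIndepSet (s : Set V) ∧ s.card = indepNum G := by
  obtain ⟨s, hs, hsup⟩ := Finset.exists_mem_eq_sup
    (Finset.univ.filter fun s : Finset V => ∀ a ∈ s, ∀ b ∈ s, ¬ G.Adj a b) ⟨∅, by simp⟩ Finset.card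
  exact ⟨s, (G.isIndepSet_coe_iff s).mpr (Finset.mem_filter.mp hs).2, hsup.symm⟩

theorem exists_isIndepSet_deleteEdges_of_indepNum_lt {x y : V}
    (h : indepNum G < indepNum (G.deleteEdges {s(x, y)})) :
    ∃ s : Finset V, (G.deleteEdges {s(x, y)}).IsIndepSet (s : Set V) ∧ x ∈ s ∧ y ∈ s ∧
      indepNum G < s.card := by
  obtain ⟨s, hs, hcard⟩ := exists_isIndepSet_card_eq_indepNum (G.deleteEdges {s(x, y)})
  by_cases hxy : x ∈ s ∧ y ∈ s
  · exact ⟨s, hs, hxy.1, hxy.2, hcard ▸ h⟩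
  · have := card_le_indepNum (hs.of_deleteEdges hxy)
    omega

theorem AlphaCritical.eq_of_adj_of_forall_adj_eq (hcrit : AlphaCritical G) {v w u : V}
    (hv : ∀ y, G.Adj v y → y = w) (hvw : G.Adj v w) (hwu : G.Adj w u) : u = v := by
  by_contra huv
  obtain ⟨s, hs, hws, -, hlt⟩ := exists_isIndepSet_deleteEdges_of_indepNum_lt (hcrit _ hwu)
  have hvs : v ∉ s := fun hvs => hs hvs hws hvw.ne
    (G.deleteEdges_adj.mpr ⟨hvw, by simp [hvw.ne, Ne.symm huv]⟩)
  have herase : G.IsIndepSet ((s.erase w : Finset V) : Set V) :=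
    SimpleGraph.IsIndepSet.of_deleteEdges (Set.Pairwise.mono (by simp) hs) (by simp)
  have hswap : G.IsIndepSet ((insert v (s.erase w) : Finset V) : Set V) := by
    rw [Finset.coe_insert, SimpleGraph.IsIndepSet, Set.pairwise_insert]
    refine ⟨herase, fun b hb _ => ⟨fun hvb => ?_, fun hbv => ?_⟩⟩
    exacts [Finset.ne_of_mem_erase hb (hv b hvb), Finset.ne_of_mem_erase hb (hv b hbv.symm)]
  have hcard : (insert v (s.erase w)).card = s.card := by
    rw [Finset.card_insert_of_notMem (fun h => hvs (Finset.mem_of_mem_erase h)),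
      Finset.card_erase_add_one hws]
  have := card_le_indepNum hswap
  omega

end IndepNum

end

theorem stmt_12 {V : Type*} [Fintype V] {G : SimpleGraph V} [DecidableRel G.Adj]
    (hcrit : AlphaCritical G) (v w : V) (hdeg : G.degree v = 1) (hw : G.Adj v w) :
    ∀ u, G.Reachable v u ↔ u = v ∨ u = w := by
  have hvN : ∀ y, G.Adj v y → y = w := fun y hy =>
    (SimpleGraph.degree_eq_one_iff_existsUnique_adj.mp hdeg).unique hy hw
  have hwN : ∀ y, G.Adj w y → y = v := fun y hy => hcrit.eq_of_adj_of_forall_adj_eq hvN hw hy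
  intro u
  refine ⟨fun h => h.mem_of_adj_closed (S := {v, w}) ?_ (by simp), ?_⟩
  · rintro a (rfl | rfl) b hab
    exacts [Or.inr (hvN b hab), Or.inl (hwN b hab)]
  · rintro (rfl | rfl)
    exacts [.rfl, hw.reachable]
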